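/- Let F be a field of characteristic ≠ 2 and let a, b ∈ M₂(F) be traceless matrices. Then det(a×b) = det(a)·det(b) − (a·b)². -/
import Mathlib


open Matrix

/-- The inner product of traceless 2×2 matrices: `a·b = -(1/2) tr(ab)`. -/
noncomputable def matInner {F : Type*} [Field F] (a b : Matrix (Fin 2) (Fin 2) F) : F :=
  -((2 : F)⁻¹ * (a * b).trace)

/-- The cross product of traceless 2×2 matrices: `a×b = (ab - ba)/2`. -/
noncomputable def matCross {F : Type*} [Field F] (a b : Matrix (Fin 2) (Fin 2) F) :
    Matrix (Fin 2) (Fin 2) F :=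
  (2 : F)⁻¹ • (a * b - b * a)

/-- `det(a×b) = det(a)·det(b) − (a·b)²` for traceless `a, b`. -/
theorem stmt5 {F : Type*} [Field F] (h2 : (2 : F) ≠ 0)
    (a b : Matrix (Fin 2) (Fin 2) F) (ha : a.trace = 0) (hb : b.trace = 0) :
    (matCross a b).det = a.det * b.det - (matInner a b) ^ 2 := by
  unfold matCross matInner
  rw [trace_fin_two] at ha hb
  have ha' : a 1 1 = -a 0 0 := by linear_combination ha
  have hb' : b 1 1 = -b 0 0 := by linear_combination hb
  simp only [det_fin_two, trace_fin_two, Matrix.smul_apply, Matrix.sub_apply, Matrix.mul_apply,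
    Fin.sum_univ_two, smul_eq_mul, ha', hb']
  field_simp
  ring
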